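/- arXiv:2512.06833 — 3 statements merged into one kernel-verified Lean document; each statement's English description precedes it below -/
import Mathlib

section
/- Let G be the symmetric 7×7 integer matrix indexed by {h, v1, ..., v6} where the v_i correspond to the vertices of K(3,3), with entries G(h,h) = 6, G(v_i,v_i) = −2, G(h,v_i) = 1 for all i, and G(v_i,v_j) = 1 if v_i and v_j are adjacent in K(3,3) and 0 otherwise (i ≠ j). Then G has rank 6, and the associated real quadratic form has exactly one positive eigenvalue (i.e., the lattice is hyperbolic of signature (1,5)). -/
/-- Adjacency of `K(3,3)` on vertices `0,…,5`, with parts `{0,1,2}` and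
`{3,4,5}`. -/
def k33Adj (a b : ℕ) : Prop := a / 3 ≠ b / 3

instance : DecidableRel k33Adj := fun a b => by unfold k33Adj; infer_instance

/-- Gram matrix of `h` (with `h² = 6`) together with the six lines of a
`K(3,3)` hyperplane section: index `0` is `h`, indices `1,…,6` are the
vertices of `K(3,3)`. -/
def gramK33 : Matrix (Fin 7) (Fin 7) ℤ :=
  Matrix.of fun i j =>
    if i = 0 ∧ j = 0 then 6
    else if i = 0 ∨ j = 0 then 1
    else if i = j then -2
    else if k33Adj (i.val - 1) (j.val - 1) then 1 else 0

/-
Rank: the Gram matrix kills `h - (v₁ + ⋯ + v₆)`, while its `K(3,3)` block is invertible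
(its adjugate is written down explicitly), so the rank is exactly `6`.

Signature: with `e = h`, one has the reverse Cauchy–Schwarz inequality
`(e·e)(x·x) ≤ (e·x)²` for every `x`, because `(e·x)² - 6 (x·x)` is an explicit sum of squares.
Since `e·e > 0` there is a positive eigenvalue, and two orthonormal eigenvectors `u, w` with
positive eigenvalues are impossible: the combination `(e·w) u - (e·u) w` is orthogonal to `e`,
hence has non-positive square, yet its square is a positive combination of `u·u` and `w·w`.
-/

open Matrix

namespace Matrix

variable {n : Type*} [Fintype n]

theorem det_ne_zero_of_mul_eq_smul_one {R : Type*} [CommRing R] [IsDomain R] [DecidableEq n]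
    {A B : Matrix n n R} {c : R} (hc : c ≠ 0) (h : A * B = c • 1) : A.det ≠ 0 := by
  have hdet : A.det * B.det = c ^ Fintype.card n := by
    rw [← det_mul, h, det_smul, det_one, mul_one]
  exact left_ne_zero_of_mul (hdet ▸ pow_ne_zero _ hc)

theorem card_le_rank_of_det_submatrix_ne_zero {R m p : Type*} [CommRing R] [IsDomain R]
    [Fintype m] [DecidableEq m] (A : Matrix p n R) (r : m → p) (c : m → n)
    (h : (A.submatrix r c).det ≠ 0) : Fintype.card m ≤ A.rank :=
  rank_of_det_ne_zero h ▸ rank_submatrix_le A r c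

theorem rank_lt_card_of_mulVec_eq_zero {K m : Type*} [Field K] (A : Matrix m n K) {v : n → K}
    (hv : v ≠ 0) (hAv : A *ᵥ v = 0) : A.rank < Fintype.card n := by
  have hker : 0 < Module.finrank K (LinearMap.ker A.mulVecLin) :=
    Module.finrank_pos_iff_exists_ne_zero.mpr ⟨⟨v, hAv⟩, fun h => hv congr($h.1)⟩
  have hrank_nullity := LinearMap.finrank_range_add_finrank_ker A.mulVecLin
  rw [Module.finrank_fintype_fun_eq_card] at hrank_nullity
  rw [rank]
  omega

variable {A : Matrix n n ℝ} {e : n → ℝ}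

theorem dotProduct_mulVec_nonpos_of_orthogonal
    (hrcs : ∀ x, (e ⬝ᵥ A *ᵥ e) * (x ⬝ᵥ A *ᵥ x) ≤ (e ⬝ᵥ A *ᵥ x) ^ 2)
    (he : 0 < e ⬝ᵥ A *ᵥ e) {u w : n → ℝ} (hu : 0 < u ⬝ᵥ A *ᵥ u)
    (huw : u ⬝ᵥ A *ᵥ w = 0) (hwu : w ⬝ᵥ A *ᵥ u = 0) : w ⬝ᵥ A *ᵥ w ≤ 0 := by
  by_contra! hw
  have hβ : 0 < (e ⬝ᵥ A *ᵥ u) ^ 2 := by nlinarith [hrcs u]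
  have hx := hrcs ((e ⬝ᵥ A *ᵥ w) • u - (e ⬝ᵥ A *ᵥ u) • w)
  simp only [mulVec_sub, mulVec_smul, dotProduct_sub, sub_dotProduct, smul_dotProduct,
    dotProduct_smul, smul_eq_mul, huw, hwu] at hx
  nlinarith [mul_nonneg (mul_nonneg he.le (sq_nonneg (e ⬝ᵥ A *ᵥ w))) hu.le,
    mul_pos (mul_pos he hβ) hw]

namespace IsHermitian

variable [DecidableEq n] (hA : A.IsHermitian)
include hA

theorem eigenvectorBasis_dotProduct_mulVec (i j : n) :
    ⇑(hA.eigenvectorBasis i) ⬝ᵥ A *ᵥ ⇑(hA.eigenvectorBasis j) =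
      if i = j then hA.eigenvalues i else 0 := by
  have h := orthonormal_iff_ite.mp hA.eigenvectorBasis.orthonormal i j
  rw [EuclideanSpace.inner_eq_star_dotProduct, star_trivial] at h
  rw [hA.mulVec_eigenvectorBasis, dotProduct_smul, dotProduct_comm, h, smul_eq_mul]
  split_ifs with hij <;> simp [hij]

theorem exists_eigenvalues_pos (he : 0 < e ⬝ᵥ A *ᵥ e) : ∃ i, 0 < hA.eigenvalues i := by
  by_contra! h
  have hneg : (-A).PosSemidef := by
    rw [hA.spectral_theorem, ← map_neg, diagonal_neg]
    simpa [Unitary.isUnit_coe.posSemidef_star_right_conjugate_iff, posSemidef_diagonal_iff]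
      using h
  have := hneg.dotProduct_mulVec_nonneg e
  rw [star_trivial, neg_mulVec, dotProduct_neg] at this
  linarith

theorem card_filter_eigenvalues_pos_eq_one
    (hrcs : ∀ x, (e ⬝ᵥ A *ᵥ e) * (x ⬝ᵥ A *ᵥ x) ≤ (e ⬝ᵥ A *ᵥ x) ^ 2)
    (he : 0 < e ⬝ᵥ A *ᵥ e) : (Finset.univ.filter fun i => 0 < hA.eigenvalues i).card = 1 := by
  obtain ⟨i, hi⟩ := hA.exists_eigenvalues_pos he
  refine Finset.card_eq_one.mpr ⟨i, Finset.eq_singleton_iff_unique_mem.mpr ⟨by simpa, ?_⟩⟩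
  intro j hj
  by_contra hji
  have := dotProduct_mulVec_nonpos_of_orthogonal hrcs he
    (by rwa [hA.eigenvectorBasis_dotProduct_mulVec, if_pos rfl])
    (by rw [hA.eigenvectorBasis_dotProduct_mulVec, if_neg (Ne.symm hji)])
    (by rw [hA.eigenvectorBasis_dotProduct_mulVec, if_neg hji])
  rw [hA.eigenvectorBasis_dotProduct_mulVec, if_pos rfl] at this
  exact (Finset.mem_filter.mp hj).2.not_ge this

end IsHermitian

end Matrix

theorem gramK33_eq : gramK33 = !![6, 1, 1, 1, 1, 1, 1;
                                  1, -2, 0, 0, 1, 1, 1;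
                                  1, 0, -2, 0, 1, 1, 1;
                                  1, 0, 0, -2, 1, 1, 1;
                                  1, 1, 1, 1, -2, 0, 0;
                                  1, 1, 1, 1, 0, -2, 0;
                                  1, 1, 1, 1, 0, 0, -2] := by
  decide

-- The adjugate `det C • C⁻¹` of the `K(3,3)` block `C` of `gramK33`; here `det C = -80`.
def k33BlockAdjugate : Matrix (Fin 6) (Fin 6) ℤ :=
  of fun i j => if i = j then 16 else if k33Adj i j then -16 else -24

theorem gramK33_submatrix_succ_mul_adjugate :
    gramK33.submatrix Fin.succ Fin.succ * k33BlockAdjugate = (-80 : ℤ) • 1 := by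
  decide

theorem gramK33_mulVec_eq_zero : gramK33 *ᵥ Fin.cons 1 (-1) = 0 := by
  decide

theorem rank_gramK33_map_rat : (gramK33.map (Int.cast : ℤ → ℚ)).rank = 6 := by
  have hker : gramK33.map (Int.cast : ℤ → ℚ) *ᵥ (Int.cast ∘ Fin.cons 1 (-1)) = 0 := by
    ext i
    have := RingHom.map_mulVec (Int.castRingHom ℚ) gramK33 (Fin.cons 1 (-1)) i
    rw [gramK33_mulVec_eq_zero, Pi.zero_apply, map_zero] at this
    exact this.symm
  have hdet : ((gramK33.map (Int.cast : ℤ → ℚ)).submatrix Fin.succ Fin.succ).det ≠ 0 := by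
    have hdetℤ := det_ne_zero_of_mul_eq_smul_one (by norm_num) gramK33_submatrix_succ_mul_adjugate
    rw [submatrix_map, ← Int.cast_det]
    exact_mod_cast hdetℤ
  have hupper := rank_lt_card_of_mulVec_eq_zero _ (fun h => by simpa using congrFun h 0) hker
  have hlower := card_le_rank_of_det_submatrix_ne_zero _ _ _ hdet
  simp only [Fintype.card_fin] at hupper hlower
  omega

theorem gramK33_reverse_cauchySchwarz (x : Fin 7 → ℝ) :
    (Pi.single 0 1 ⬝ᵥ gramK33.map (Int.cast : ℤ → ℝ) *ᵥ Pi.single 0 1) *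
        (x ⬝ᵥ gramK33.map (Int.cast : ℤ → ℝ) *ᵥ x) ≤
      (Pi.single 0 1 ⬝ᵥ gramK33.map (Int.cast : ℤ → ℝ) *ᵥ x) ^ 2 := by
  have key : (Pi.single 0 1 ⬝ᵥ gramK33.map (Int.cast : ℤ → ℝ) *ᵥ x) ^ 2 -
      (Pi.single 0 1 ⬝ᵥ gramK33.map (Int.cast : ℤ → ℝ) *ᵥ Pi.single 0 1) *
        (x ⬝ᵥ gramK33.map (Int.cast : ℤ → ℝ) *ᵥ x) =
      5 * (x 1 + x 2 + x 3 - x 4 - x 5 - x 6) ^ 2 +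
        4 * ((x 1 - x 2) ^ 2 + (x 1 - x 3) ^ 2 + (x 2 - x 3) ^ 2 +
          (x 4 - x 5) ^ 2 + (x 4 - x 6) ^ 2 + (x 5 - x 6) ^ 2) := by
    rw [gramK33_eq]
    simp only [mulVec, dotProduct, Fin.sum_univ_seven, map_apply, of_apply, cons_val',
      cons_val_fin_one, cons_val_zero, cons_val_one, cons_val, Pi.single_apply, ↓reduceIte,
      Fin.reduceEq, one_ne_zero, Int.cast_ofNat, Int.cast_one, Int.cast_neg, Int.cast_zero]
    ring
  nlinarith [key]

/-- The Gram matrix of the `K(3,3)` configuration in degree 6 has rank 6, and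
the associated real symmetric matrix has exactly one positive eigenvalue
(hyperbolic signature `(1,5)`). -/
theorem gramK33_rank_and_signature :
    (gramK33.map (Int.cast : ℤ → ℚ)).rank = 6 ∧
    ∀ h : (gramK33.map (Int.cast : ℤ → ℝ)).IsHermitian,
      (Finset.univ.filter fun i => 0 < h.eigenvalues i).card = 1 := by
  refine ⟨rank_gramK33_map_rat, fun h => h.card_filter_eigenvalues_pos_eq_one
    gramK33_reverse_cauchySchwarz ?_⟩
  rw [gramK33_eq]
  simp
end

section
/- There is no matrix M in GL(2, Z) with det M = −1 such that Mᵀ G M = G, where G is the Gram matrix [[4, 1], [1, 14]]. In other words, the rank-2 positive definite lattice [4,1,14] admits no orientation-reversing isometry. -/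
/-- The lattice `[4,1,14]` (the transcendental lattice of the quartic
`X''₆₀`) admits no orientation-reversing isometry: there is no integral
matrix `M` with `det M = -1` and `Mᵀ G M = G`. -/
theorem no_orientation_reversing_isometry_4_1_14 :
    ¬ ∃ M : Matrix (Fin 2) (Fin 2) ℤ, M.det = -1 ∧
      M.transpose * !![4, 1; 1, 14] * M = !![4, 1; 1, 14] := by
  rintro ⟨M, hdet, hG⟩
  rw [Matrix.det_fin_two] at hdet
  have h00 := congrFun (congrFun hG 0) 0
  have h01 := congrFun (congrFun hG 0) 1
  simp [Matrix.mul_apply, Fin.sum_univ_two, Matrix.transpose_apply] at h00 h01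
  -- (4a+c)² + 55c² = 16 forces c = M 1 0 = 0
  have hc0 : M 1 0 = 0 := by
    nlinarith [sq_nonneg (4 * M 0 0 + M 1 0), sq_nonneg (M 1 0 + 1), sq_nonneg (M 1 0 - 1)]
  rw [hc0] at h01 hdet
  have he : 4 * (M 0 0 * M 0 1) = 2 := by linarith
  omega
end

section
/- Let A be a finite abelian group equipped with a symmetric Q/Z-valued bilinear form b, and suppose u, v ∈ A have order 2, with b(u,u) = b(v,v) = 0 and b(u,v) = 1/2 in Q/Z. Then the subgroup H = ⟨u, v⟩ is isomorphic to (Z/2)², the restriction of b to H is nondegenerate, and A decomposes as the orthogonal direct sum A = H ⊕ H^⊥, where H^⊥ = {a ∈ A : b(a, h) = 0 for all h ∈ H}. -/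
private lemma half_ne_zero_addCircle :
    ((1/2 : ℚ) : AddCircle (1 : ℚ)) ≠ 0 := by
  intro h
  rw [AddCircle.coe_eq_zero_iff] at h
  obtain ⟨n, hn⟩ := h
  rw [zsmul_eq_mul, mul_one] at hn
  have h2 : (2 * n : ℚ) = 1 := by linarith
  have : (2 * n : ℤ) = 1 := by exact_mod_cast h2
  omega

private lemma two_torsion_addCircle (t : AddCircle (1 : ℚ)) (h : t + t = 0) :
    t = 0 ∨ t = ((1/2 : ℚ) : AddCircle (1 : ℚ)) := by
  induction t using QuotientAddGroup.induction_on with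
  | H q =>
    have hq : ((q + q : ℚ) : AddCircle (1 : ℚ)) = 0 := by
      exact h
    rw [AddCircle.coe_eq_zero_iff] at hq
    obtain ⟨n, hn⟩ := hq
    rw [zsmul_eq_mul, mul_one] at hn
    rcases Int.even_or_odd n with ⟨k, hk⟩ | ⟨k, hk⟩
    · left
      rw [AddCircle.coe_eq_zero_iff]
      refine ⟨k, ?_⟩
      rw [zsmul_eq_mul, mul_one]
      push_cast [hk] at hn
      linarith
    · right
      have hq2 : q = (k : ℚ) + 1/2 := by
        push_cast [hk] at hn
        linarith
      have hk0 : (((k : ℚ)) : AddCircle (1 : ℚ)) = 0 := by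
        rw [AddCircle.coe_eq_zero_iff]
        exact ⟨k, by rw [zsmul_eq_mul, mul_one]⟩
      calc ((q : ℚ) : AddCircle (1 : ℚ))
          = (((k : ℚ) + 1/2 : ℚ) : AddCircle (1 : ℚ)) := by rw [hq2]
        _ = (((k : ℚ)) : AddCircle (1 : ℚ)) + ((1/2 : ℚ) : AddCircle (1 : ℚ)) :=
            by rw [AddCircle.coe_add]
        _ = ((1/2 : ℚ) : AddCircle (1 : ℚ)) := by rw [hk0, zero_add]

/-- Splitting off a `u₂ = discr U(2)` summand: if a symmetric `ℚ/ℤ`-valued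
bilinear form on a finite abelian group has two order-2 elements `u, v` with
`b(u,u) = b(v,v) = 0` and `b(u,v) = 1/2`, then `H = ⟨u,v⟩ ≅ (ℤ/2)²`, `b` is
nondegenerate on `H`, and `A` is the orthogonal direct sum of `H` and
`H^⊥`. -/
theorem u2_summand_splits
    (A : Type*) [AddCommGroup A] [Fintype A]
    (b : A → A → AddCircle (1 : ℚ))
    (hadd : ∀ a a' c, b (a + a') c = b a c + b a' c)
    (hsymm : ∀ a c, b a c = b c a)
    (u v : A) (hu : addOrderOf u = 2) (hv : addOrderOf v = 2)
    (huu : b u u = 0) (hvv : b v v = 0)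
    (huv : b u v = ((1 / 2 : ℚ) : AddCircle (1 : ℚ))) :
    Nonempty (AddSubgroup.closure ({u, v} : Set A) ≃+ (ZMod 2 × ZMod 2)) ∧
    (∀ h ∈ AddSubgroup.closure ({u, v} : Set A),
      (∀ h' ∈ AddSubgroup.closure ({u, v} : Set A), b h h' = 0) → h = 0) ∧
    (∀ a : A, ∃ h ∈ AddSubgroup.closure ({u, v} : Set A),
      ∃ p, (∀ h' ∈ AddSubgroup.closure ({u, v} : Set A), b p h' = 0) ∧ a = h + p) ∧
    (∀ a ∈ AddSubgroup.closure ({u, v} : Set A),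
      (∀ h' ∈ AddSubgroup.closure ({u, v} : Set A), b a h' = 0) → a = 0) := by
  set H := AddSubgroup.closure ({u, v} : Set A) with hH
  -- basic facts about b
  have hb0 : ∀ c, b 0 c = 0 := by
    intro c
    have h := hadd 0 0 c
    rw [add_zero] at h
    exact (left_eq_add.mp h)
  have hb0' : ∀ c, b c 0 = 0 := fun c => by rw [hsymm]; exact hb0 c
  have hneg : ∀ a c, b (-a) c = - b a c := by
    intro a c
    have h := hadd (-a) a c
    rw [neg_add_cancel, hb0] at h
    exact eq_neg_of_add_eq_zero_left h.symm
  -- order 2 facts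
  have h2u : u + u = 0 := by
    have := addOrderOf_nsmul_eq_zero u
    rw [hu, two_nsmul] at this
    exact this
  have h2v : v + v = 0 := by
    have := addOrderOf_nsmul_eq_zero v
    rw [hv, two_nsmul] at this
    exact this
  have hvu : b v u = ((1/2 : ℚ) : AddCircle (1 : ℚ)) := by rw [hsymm]; exact huv
  have half_ne : ((1/2 : ℚ) : AddCircle (1 : ℚ)) ≠ 0 := half_ne_zero_addCircle
  have huH : u ∈ H := AddSubgroup.subset_closure (by simp)
  have hvH : v ∈ H := AddSubgroup.subset_closure (by simp)
  -- nonvanishing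
  have hu0 : u ≠ 0 := by
    intro h; apply half_ne; rw [← huv, h, hb0]
  have hv0 : v ≠ 0 := by
    intro h; apply half_ne; rw [← hvu, h, hb0]
  have huv0 : u + v ≠ 0 := by
    intro h
    apply half_ne
    have := hadd u v v
    rw [h, hb0, hvv, add_zero] at this
    rw [← huv, ← this]
  -- the homomorphism φ : ZMod 2 × ZMod 2 →+ A
  have hcu : (zmultiplesHom A u) (2 : ℤ) = 0 := by
    simp [zmultiplesHom, two_zsmul, h2u]
  have hcv : (zmultiplesHom A v) (2 : ℤ) = 0 := by
    simp [zmultiplesHom, two_zsmul, h2v]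
  set fU : ZMod 2 →+ A := ZMod.lift 2 ⟨zmultiplesHom A u, hcu⟩ with hfU
  set fV : ZMod 2 →+ A := ZMod.lift 2 ⟨zmultiplesHom A v, hcv⟩ with hfV
  set φ : ZMod 2 × ZMod 2 →+ A := AddMonoidHom.coprod fU fV with hφ
  have hfU0 : fU 0 = 0 := map_zero fU
  have hfV0 : fV 0 = 0 := map_zero fV
  have hfU1 : fU 1 = u := by
    have : ((1 : ℤ) : ZMod 2) = 1 := by norm_cast
    rw [hfU, ← this, ZMod.lift_coe]
    simp [zmultiplesHom]
  have hfV1 : fV 1 = v := by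
    have : ((1 : ℤ) : ZMod 2) = 1 := by norm_cast
    rw [hfV, ← this, ZMod.lift_coe]
    simp [zmultiplesHom]
  have hφval : ∀ m n : ZMod 2, φ (m, n) = fU m + fV n := fun m n => rfl
  have hcases : ∀ x : ZMod 2, x = 0 ∨ x = 1 := by decide
  -- range of φ is H
  have hrange : ∀ x ∈ H, ∃ p : ZMod 2 × ZMod 2, φ p = x := by
    have hle : H ≤ φ.range := by
      rw [hH]
      apply AddSubgroup.closure_le _ |>.mpr
      intro x hx
      rcases hx with h | h
      · exact ⟨(1, 0), by rw [hφval, hfU1, hfV0, add_zero, h]⟩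
      · simp only [Set.mem_singleton_iff] at h
        exact ⟨(0, 1), by rw [hφval, hfU0, hfV1, zero_add, h]⟩
    intro x hx
    exact hle hx
  have hmemrange : ∀ p : ZMod 2 × ZMod 2, φ p ∈ H := by
    rintro ⟨m, n⟩
    rw [hφval]
    apply AddSubgroup.add_mem
    · rcases hcases m with h | h <;> rw [h]
      · rw [hfU0]; exact AddSubgroup.zero_mem _
      · rw [hfU1]; exact huH
    · rcases hcases n with h | h <;> rw [h]
      · rw [hfV0]; exact AddSubgroup.zero_mem _
      · rw [hfV1]; exact hvH
  have hinj : Function.Injective φ := by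
    rw [injective_iff_map_eq_zero]
    rintro ⟨m, n⟩ hmn
    rw [hφval] at hmn
    rcases hcases m with hm | hm <;> rcases hcases n with hn | hn <;>
      rw [hm, hn] at hmn ⊢
    · rfl
    · rw [hfU0, hfV1, zero_add] at hmn; exact absurd hmn hv0
    · rw [hfU1, hfV0, add_zero] at hmn; exact absurd hmn hu0
    · rw [hfU1, hfV1] at hmn; exact absurd hmn huv0
  -- the equivalence
  refine ⟨?_, ?_, ?_, ?_⟩
  · set ψ : ZMod 2 × ZMod 2 →+ H := φ.codRestrict H hmemrange with hψ
    have hψbij : Function.Bijective ψ := by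
      constructor
      · intro x y hxy
        apply hinj
        exact congrArg Subtype.val hxy
      · rintro ⟨x, hx⟩
        obtain ⟨p, hp⟩ := hrange x hx
        exact ⟨p, Subtype.ext hp⟩
    exact ⟨(AddEquiv.ofBijective ψ hψbij).symm⟩
  · intro h hh hperp
    obtain ⟨⟨m, n⟩, hp⟩ := hrange h hh
    rw [hφval] at hp
    rcases hcases m with hm | hm <;> rcases hcases n with hn | hn <;>
      rw [hm, hn] at hp
    · rw [← hp, hfU0, hfV0, add_zero]
    · exfalso
      apply half_ne
      rw [hfU0, hfV1, zero_add] at hp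
      have := hperp u huH
      rw [← hp] at this
      rw [← hvu]
      exact this
    · exfalso
      apply half_ne
      rw [hfU1, hfV0, add_zero] at hp
      have := hperp v hvH
      rw [← hp] at this
      rw [← huv]
      exact this
    · exfalso
      apply half_ne
      rw [hfU1, hfV1] at hp
      have : b h u = ((1/2 : ℚ) : AddCircle (1 : ℚ)) := by
        rw [← hp, hadd, huu, hvu, zero_add]
      rw [← this]
      exact hperp u huH
  · -- splitting
    intro a
    have htorsu : b a u + b a u = 0 := by
      rw [hsymm a u, ← hadd, h2u, hb0]
    have htorsv : b a v + b a v = 0 := by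
      rw [hsymm a v, ← hadd, h2v, hb0]
    set h : A := (if b a v = ((1/2 : ℚ) : AddCircle (1 : ℚ)) then u else 0) +
        (if b a u = ((1/2 : ℚ) : AddCircle (1 : ℚ)) then v else 0) with hhdef
    have hhH : h ∈ H := by
      apply AddSubgroup.add_mem <;> split <;>
        first | exact huH | exact hvH | exact AddSubgroup.zero_mem _
    have half_ne' : (0 : AddCircle (1 : ℚ)) ≠ ((1/2 : ℚ) : AddCircle (1 : ℚ)) :=
      Ne.symm half_ne
    have hbhu : b h u = b a u := by
      rw [hhdef, hadd]
      rcases two_torsion_addCircle _ htorsu with h1 | h1 <;>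
        rcases two_torsion_addCircle _ htorsv with h2 | h2 <;>
        rw [h1, h2]
      · rw [if_neg (Ne.symm half_ne), if_neg (Ne.symm half_ne), hb0 u, add_zero]
      · rw [if_pos rfl, if_neg (Ne.symm half_ne), huu, hb0 u, add_zero]
      · rw [if_neg (Ne.symm half_ne), if_pos rfl, hb0 u, zero_add, hvu]
      · rw [if_pos rfl, if_pos rfl, huu, zero_add, hvu]
    have hbhv : b h v = b a v := by
      rw [hhdef, hadd]
      rcases two_torsion_addCircle _ htorsu with h1 | h1 <;>
        rcases two_torsion_addCircle _ htorsv with h2 | h2 <;>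
        rw [h1, h2]
      · rw [if_neg (Ne.symm half_ne), if_neg (Ne.symm half_ne), hb0 v, add_zero]
      · rw [if_pos rfl, if_neg (Ne.symm half_ne), hb0 v, add_zero, huv]
      · rw [if_neg (Ne.symm half_ne), if_pos rfl, hb0 v, hvv, add_zero]
      · rw [if_pos rfl, if_pos rfl, huv, hvv, add_zero]
    refine ⟨h, hhH, a - h, ?_, by abel⟩
    have hpu : b (a - h) u = 0 := by
      rw [sub_eq_add_neg, hadd, hneg, hbhu, add_neg_cancel]
    have hpv : b (a - h) v = 0 := by
      rw [sub_eq_add_neg, hadd, hneg, hbhv, add_neg_cancel]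
    intro h' hh'
    obtain ⟨⟨m, n⟩, hp⟩ := hrange h' hh'
    rw [hφval] at hp
    have key : ∀ x y : A, b (a - h) x = 0 → b (a - h) y = 0 → b (a - h) (x + y) = 0 := by
      intro x y hx hy
      rw [hsymm, hadd, hsymm x, hsymm y, hx, hy, add_zero]
    have h00 : b (a - h) 0 = 0 := hb0' _
    rcases hcases m with hm | hm <;> rcases hcases n with hn | hn <;>
      rw [hm, hn] at hp <;> rw [← hp]
    · rw [hfU0, hfV0]; exact key _ _ h00 h00
    · rw [hfU0, hfV1]; exact key _ _ h00 hpv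
    · rw [hfU1, hfV0]; exact key _ _ hpu h00
    · rw [hfU1, hfV1]; exact key _ _ hpu hpv
  · intro a ha hperp
    obtain ⟨⟨m, n⟩, hp⟩ := hrange a ha
    rw [hφval] at hp
    rcases hcases m with hm | hm <;> rcases hcases n with hn | hn <;>
      rw [hm, hn] at hp
    · rw [← hp, hfU0, hfV0, add_zero]
    · exfalso
      apply half_ne
      rw [hfU0, hfV1, zero_add] at hp
      have := hperp u huH
      rw [← hp] at this
      rw [← hvu]
      exact this
    · exfalso
      apply half_ne
      rw [hfU1, hfV0, add_zero] at hp
      have := hperp v hvH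
      rw [← hp] at this
      rw [← huv]
      exact this
    · exfalso
      apply half_ne
      rw [hfU1, hfV1] at hp
      have : b a u = ((1/2 : ℚ) : AddCircle (1 : ℚ)) := by
        rw [← hp, hadd, huu, hvu, zero_add]
      rw [← this]
      exact hperp u huH
end
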